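/- arXiv:2206.01113 — 2 statements merged into one kernel-verified Lean document; each statement's English description precedes it below -/
import Mathlib

section
/- Let X be a set. The Boolean algebra of clopen subsets of the Cantor-type space 2^X (product topology on X → Bool) is the free Boolean algebra on the set X, with generator x ∈ X corresponding to the clopen {f : X → Bool | f x = true}. -/
/-!
A clopen subset `U` of `X → Bool` is compact and open, so it depends on only finitely many
coordinates `s`, and it is then the union of the cylinders over `s` that it contains. These
cylinders are the minterms over `s` of the generators `{f | f x = true}`, so the extension of
`φ : X → B` must send `U` to the join of the corresponding minterms of `φ`, which proves
uniqueness. For existence, this join does not depend on the choice of `s`, because the two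
minterms over `insert y s` refining a minterm over `s` join to it; it preserves joins by
construction and meets because distinct minterms over `s` are disjoint.
-/

noncomputable section

open TopologicalSpace
open scoped Classical

theorem Finset.sup_inter_of_pairwiseDisjoint {ι α : Type*} [DecidableEq ι] [DistribLattice α]
    [OrderBot α]
    {A C : Finset ι} {f : ι → α} (hf : (↑(A ∪ C) : Set ι).PairwiseDisjoint f) :
    (A ∩ C).sup f = A.sup f ⊓ C.sup f := by
  refine le_antisymm (le_inf (sup_mono inter_subset_left) (sup_mono inter_subset_right)) ?_
  rw [sup_inf_sup]
  refine Finset.sup_le fun ⟨a, c⟩ hac => ?_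
  obtain ⟨ha, hc⟩ := mem_product.mp hac
  by_cases h : a = c
  · subst h
    rw [inf_idem]
    exact le_sup (mem_inter.mpr ⟨ha, hc⟩)
  · rw [(hf (by simp [ha]) (by simp [hc]) h).eq_bot]
    exact bot_le

theorem TopologicalSpace.Clopens.coe_finset_inf {ι α : Type*} [TopologicalSpace α]
    (s : Finset ι) (U : ι → Clopens α) : (↑(s.inf U) : Set α) = ⋂ i ∈ s, U i := by
  induction s using Finset.induction_on with
  | empty => simp
  | insert _ _ _ IH => simp [IH]

theorem IsCompact.exists_finset_dependsOn_mem {ι : Type*} {α : ι → Type*}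
    [∀ i, TopologicalSpace (α i)] [∀ i, DiscreteTopology (α i)] {U : Set (∀ i, α i)}
    (hc : IsCompact U) (ho : IsOpen U) : ∃ s : Finset ι, DependsOn (· ∈ U) ↑s := by
  have hcyl : ∀ f ∈ U, ∃ I : Finset ι, (I : Set ι).pi (fun i => {f i}) ⊆ U := by
    intro f hf
    obtain ⟨I, u, hu, hIu⟩ := isOpen_pi_iff.mp ho f hf
    exact ⟨I, fun g hg => hIu fun i hi => (hg i hi : g i = f i) ▸ (hu i hi).2⟩
  choose I hI using hcyl
  obtain ⟨t, htU⟩ := hc.elim_nhds_subcover' (fun f hf => (I f hf : Set ι).pi fun i => {f i})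
    fun f hf => set_pi_mem_nhds (I f hf).finite_toSet fun i _ => mem_nhds_discrete.mpr rfl
  have hmem : ∀ f g : ∀ i, α i, (∀ i ∈ t.biUnion fun f => I f.1 f.2, f i = g i) →
      f ∈ U → g ∈ U := by
    intro f g hfg hf
    obtain ⟨j, hj, hfj⟩ := Set.mem_iUnion₂.mp (htU hf)
    refine hI j.1 j.2 fun i hi => ?_
    rw [Set.mem_singleton_iff, ← hfj i hi]
    exact (hfg i (Finset.mem_biUnion.mpr ⟨j, hj, hi⟩)).symm
  exact ⟨t.biUnion fun f => I f.1 f.2, fun f g hfg =>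
    propext ⟨hmem f g hfg, hmem g f fun i hi => (hfg i hi).symm⟩⟩

section Minterm

variable {X B : Type*} [BooleanAlgebra B]

def minterm (φ : X → B) (s T : Finset X) : B :=
  s.inf fun x => if x ∈ T then φ x else (φ x)ᶜ

theorem minterm_congr (φ : X → B) {s T T' : Finset X} (h : ∀ x ∈ s, x ∈ T ↔ x ∈ T') :
    minterm φ s T = minterm φ s T' :=
  Finset.inf_congr rfl fun x hx => by simp only [h x hx]

theorem minterm_insert_sup_minterm_insert (φ : X → B) {y : X} {s T : Finset X}
    (hys : y ∉ s) (hyT : y ∉ T) :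
    minterm φ (insert y s) T ⊔ minterm φ (insert y s) (insert y T) = minterm φ s T := by
  have hT : minterm φ s (insert y T) = minterm φ s T :=
    minterm_congr φ fun x hx => by simp [ne_of_mem_of_not_mem hx hys]
  rw [minterm, minterm, Finset.inf_insert, Finset.inf_insert, if_neg hyT,
    if_pos (Finset.mem_insert_self y T), ← minterm, ← minterm, hT, ← inf_sup_right,
    compl_sup_eq_top, top_inf_eq]

theorem disjoint_minterm (φ : X → B) {s T T' : Finset X} (hT : T ⊆ s) (hT' : T' ⊆ s)
    (hne : T ≠ T') : Disjoint (minterm φ s T) (minterm φ s T') := by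
  obtain ⟨x, hx⟩ : ∃ x, ¬(x ∈ T ↔ x ∈ T') := by
    by_contra! h
    exact hne (Finset.ext h)
  have hxs : x ∈ s := by
    by_cases h : x ∈ T
    · exact hT h
    · exact hT' (by tauto)
  refine Disjoint.mono (Finset.inf_le hxs) (Finset.inf_le hxs) ?_
  by_cases h : x ∈ T <;> simp_all [disjoint_compl_left, disjoint_compl_right]

theorem map_minterm {C F : Type*} [BooleanAlgebra C] [FunLike F B C]
    [BoundedLatticeHomClass F B C] (h : F) (φ : X → B) (s T : Finset X) :
    h (minterm φ s T) = minterm (h ∘ φ) s T := by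
  rw [minterm, map_finset_inf]
  exact Finset.inf_congr rfl fun x _ => by
    simp only [apply_ite h, map_compl', Function.comp_apply]

end Minterm

namespace CantorClopens

variable {X : Type*}

def generator (x : X) : Clopens (X → Bool) :=
  ⟨{f | f x = true}, (isClopen_discrete {true}).preimage (continuous_apply x)⟩

@[simp]
theorem mem_generator {x : X} {f : X → Bool} : f ∈ generator x ↔ f x = true := Iff.rfl

theorem dependsOn_mem_generator (x : X) : DependsOn (· ∈ generator x) ↑({x} : Finset X) :=
  fun f g hfg => by simp [hfg x (Finset.mem_singleton_self x)]

theorem mem_minterm_generator {s T : Finset X} {f : X → Bool} :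
    f ∈ minterm generator s T ↔ ∀ x ∈ s, f x = (T : Set X).boolIndicator x := by
  rw [← SetLike.mem_coe, minterm, Clopens.coe_finset_inf]
  simp only [Set.mem_iInter₂]
  refine forall₂_congr fun x _ => ?_
  split_ifs with h <;> simp [h, Set.boolIndicator]

theorem dependsOn_mem_sup {s : Set X} {U V : Clopens (X → Bool)} (hU : DependsOn (· ∈ U) s)
    (hV : DependsOn (· ∈ V) s) : DependsOn (· ∈ U ⊔ V) s :=
  fun _ _ h => congrArg₂ (· ∨ ·) (hU h) (hV h)

theorem dependsOn_mem_inf {s : Set X} {U V : Clopens (X → Bool)} (hU : DependsOn (· ∈ U) s)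
    (hV : DependsOn (· ∈ V) s) : DependsOn (· ∈ U ⊓ V) s :=
  fun _ _ h => congrArg₂ (· ∧ ·) (hU h) (hV h)

theorem exists_finset_dependsOn (U : Clopens (X → Bool)) :
    ∃ s : Finset X, DependsOn (· ∈ U) ↑s :=
  U.isClopen.isClosed.isCompact.exists_finset_dependsOn_mem U.isClopen.isOpen

section Extension

variable {B : Type*} [BooleanAlgebra B]

/-- Over coordinates `s`, the cylinder with true-set `T ⊆ s` contains the point
`T.boolIndicator`; when `U` depends on `s`, the cylinder lies in `U` iff that point does. -/
def supMinterms (φ : X → B) (s : Finset X) (U : Clopens (X → Bool)) : B :=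
  (s.powerset.filter fun T : Finset X => (T : Set X).boolIndicator ∈ U).sup (minterm φ s)

theorem map_supMinterms {C F : Type*} [BooleanAlgebra C] [FunLike F B C]
    [BoundedLatticeHomClass F B C] (h : F) (φ : X → B) (s : Finset X)
    (U : Clopens (X → Bool)) : h (supMinterms φ s U) = supMinterms (h ∘ φ) s U := by
  rw [supMinterms, map_finset_sup]
  exact Finset.sup_congr rfl fun T _ => map_minterm h φ s T

theorem supMinterms_generator {s : Finset X} {U : Clopens (X → Bool)}
    (hU : DependsOn (· ∈ U) ↑s) : supMinterms generator s U = U := by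
  ext f
  rw [supMinterms, Clopens.coe_finset_sup]
  simp only [Set.mem_iUnion₂, SetLike.mem_coe, Finset.mem_filter, Finset.mem_powerset,
    mem_minterm_generator, exists_prop]
  constructor
  · rintro ⟨T, ⟨-, hTU⟩, hfT⟩
    exact (hU fun x hx => (hfT x hx).symm).mp hTU
  · intro hf
    refine ⟨s.filter fun x => f x = true, ⟨Finset.filter_subset _ _, ?_⟩, fun x hx => ?_⟩
    · refine (hU fun x hx => ?_).mp hf
      cases h : f x <;> simp [Set.boolIndicator, Finset.mem_coe.mp hx, h]
    · cases h : f x <;> simp [Set.boolIndicator, hx, h]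

theorem supMinterms_sup (φ : X → B) (s : Finset X) (U V : Clopens (X → Bool)) :
    supMinterms φ s (U ⊔ V) = supMinterms φ s U ⊔ supMinterms φ s V := by
  rw [supMinterms, supMinterms, supMinterms, ← Finset.sup_union, ← Finset.filter_or]
  exact congrArg (Finset.sup · _) (Finset.filter_congr fun T _ => Iff.rfl)

theorem supMinterms_inf (φ : X → B) (s : Finset X) (U V : Clopens (X → Bool)) :
    supMinterms φ s (U ⊓ V) = supMinterms φ s U ⊓ supMinterms φ s V := by
  rw [supMinterms, supMinterms, supMinterms, ← Finset.sup_inter_of_pairwiseDisjoint,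
    ← Finset.filter_and]
  · exact congrArg (Finset.sup · _) (Finset.filter_congr fun T _ => Iff.rfl)
  · intro T hT T' hT' hne
    simp only [Finset.coe_union, Set.mem_union, Finset.mem_coe, Finset.mem_filter,
      Finset.mem_powerset] at hT hT'
    exact disjoint_minterm φ (hT.elim And.left And.left) (hT'.elim And.left And.left) hne

theorem supMinterms_insert (φ : X → B) {s : Finset X} {U : Clopens (X → Bool)}
    (hU : DependsOn (· ∈ U) ↑s) (y : X) :
    supMinterms φ (insert y s) U = supMinterms φ s U := by
  by_cases hys : y ∈ s
  · rw [Finset.insert_eq_of_mem hys]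
  have hy : ∀ T ∈ s.powerset, y ∉ T := fun T hT hyT => hys (Finset.mem_powerset.mp hT hyT)
  have hinsert : ∀ T ∈ s.powerset, (((insert y T : Finset X) : Set X).boolIndicator ∈ U ↔
      (T : Set X).boolIndicator ∈ U) := fun T hT => by
    refine (hU fun x hx => ?_).to_iff
    simp [Set.boolIndicator, ne_of_mem_of_not_mem hx hys]
  rw [supMinterms, Finset.powerset_insert, Finset.filter_union, Finset.filter_image,
    Finset.sup_union, Finset.sup_image, Finset.filter_congr fun T hT => hinsert T hT,
    ← Finset.sup_sup, supMinterms]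
  refine Finset.sup_congr rfl fun T hT => ?_
  exact minterm_insert_sup_minterm_insert φ hys (hy T (Finset.mem_filter.mp hT).1)

theorem supMinterms_union (φ : X → B) {s : Finset X} {U : Clopens (X → Bool)}
    (hU : DependsOn (· ∈ U) ↑s) (t : Finset X) :
    supMinterms φ (s ∪ t) U = supMinterms φ s U := by
  induction t using Finset.induction_on with
  | empty => rw [Finset.union_empty]
  | insert y t _ ih =>
    rw [Finset.union_insert,
      supMinterms_insert φ (hU.mono (Finset.coe_subset.mpr Finset.subset_union_left)) y, ih]

theorem supMinterms_eq_of_dependsOn (φ : X → B) {s t : Finset X} {U : Clopens (X → Bool)}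
    (hs : DependsOn (· ∈ U) ↑s) (ht : DependsOn (· ∈ U) ↑t) :
    supMinterms φ s U = supMinterms φ t U := by
  rw [← supMinterms_union φ hs t, Finset.union_comm, supMinterms_union φ ht s]

theorem supMinterms_bot (φ : X → B) (s : Finset X) : supMinterms φ s ⊥ = ⊥ := by
  simp [supMinterms, ← SetLike.mem_coe]

theorem supMinterms_empty_top (φ : X → B) : supMinterms φ ∅ ⊤ = ⊤ := by
  simp [supMinterms, minterm, ← SetLike.mem_coe]

theorem supMinterms_singleton_generator (φ : X → B) (x : X) :
    supMinterms φ {x} (generator x) = φ x := by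
  have hfilter : ({x} : Finset X).powerset.filter (fun T => x ∈ T) = {{x}} := by
    ext T
    grind [Finset.subset_singleton_iff]
  simp [supMinterms, minterm, Set.boolIndicator, hfilter]

theorem supMinterms_choose_eq (φ : X → B) {s : Finset X} {U : Clopens (X → Bool)}
    (hs : DependsOn (· ∈ U) ↑s) :
    supMinterms φ (exists_finset_dependsOn U).choose U = supMinterms φ s U :=
  supMinterms_eq_of_dependsOn φ (exists_finset_dependsOn U).choose_spec hs

theorem exists_finset_dependsOn_pair (U V : Clopens (X → Bool)) :
    ∃ s : Finset X, DependsOn (· ∈ U) ↑s ∧ DependsOn (· ∈ V) ↑s := by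
  obtain ⟨s, hs⟩ := exists_finset_dependsOn U
  obtain ⟨t, ht⟩ := exists_finset_dependsOn V
  exact ⟨s ∪ t, hs.mono (by simp), ht.mono (by simp)⟩

def extend (φ : X → B) : BoundedLatticeHom (Clopens (X → Bool)) B where
  toFun U := supMinterms φ (exists_finset_dependsOn U).choose U
  map_sup' U V := by
    obtain ⟨s, hU, hV⟩ := exists_finset_dependsOn_pair U V
    simp only [supMinterms_choose_eq φ hU, supMinterms_choose_eq φ hV,
      supMinterms_choose_eq φ (dependsOn_mem_sup hU hV), supMinterms_sup]
  map_inf' U V := by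
    obtain ⟨s, hU, hV⟩ := exists_finset_dependsOn_pair U V
    simp only [supMinterms_choose_eq φ hU, supMinterms_choose_eq φ hV,
      supMinterms_choose_eq φ (dependsOn_mem_inf hU hV), supMinterms_inf]
  map_top' := (supMinterms_choose_eq φ (s := ∅) (U := ⊤) fun _ _ _ => rfl).trans
    (supMinterms_empty_top φ)
  map_bot' := supMinterms_bot φ _

theorem extend_apply (φ : X → B) {s : Finset X} {U : Clopens (X → Bool)}
    (hs : DependsOn (· ∈ U) ↑s) : extend φ U = supMinterms φ s U :=
  supMinterms_choose_eq φ hs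

theorem extend_generator (φ : X → B) (x : X) : extend φ (generator x) = φ x := by
  rw [extend_apply φ (dependsOn_mem_generator x), supMinterms_singleton_generator]

theorem eq_extend {φ : X → B} (h : BoundedLatticeHom (Clopens (X → Bool)) B)
    (hφ : ∀ x, h (generator x) = φ x) : h = extend φ := by
  ext U
  obtain ⟨s, hs⟩ := exists_finset_dependsOn U
  calc h U = h (supMinterms generator s U) := by rw [supMinterms_generator hs]
    _ = supMinterms (h ∘ generator) s U := map_supMinterms h generator s U
    _ = extend φ U := by rw [extend_apply φ hs, ← funext hφ]; rfl

end Extension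

end CantorClopens

end

/-- The Boolean algebra of clopen subsets of `2^X = (X → Bool)` (product topology)
is the free Boolean algebra on `X`: the generators `x ↦ {f | f x = true}` have the
universal property that every function from `X` to a Boolean algebra `B` extends
uniquely to a Boolean algebra homomorphism `Clopens (X → Bool) → B`. -/
theorem clopens_pow_bool_free (X : Type*) :
    ∃ g : X → TopologicalSpace.Clopens (X → Bool),
      (∀ x : X, (g x : Set (X → Bool)) = {f : X → Bool | f x = true}) ∧
      ∀ (B : Type) [BooleanAlgebra B] (φ : X → B),
        ∃! h : BoundedLatticeHom (TopologicalSpace.Clopens (X → Bool)) B,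
          ∀ x : X, h (g x) = φ x :=
  ⟨CantorClopens.generator, fun _ => rfl, fun _ _ φ =>
    ⟨CantorClopens.extend φ, CantorClopens.extend_generator φ, CantorClopens.eq_extend⟩⟩
end

section
/- Let Y be a finite set with decidable equality and X any set. The ultrafilters of the Boolean algebra B presented by generators X × Y subject to relations 1 ≤ ⋁_{y∈Y}(x,y) for each x ∈ X and (x,y) ∧ (x,y') ≤ 0 for y ≠ y', are in bijection with functions X → Y. -/
/-!
A Boolean homomorphism `B → Bool` is determined, by the universal property, by the images of the
generators, and these range exactly over the `Bool`-valued families satisfying the relations.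
In `Bool` the relations say that for every `x` exactly one `(x, y)` is `true`, i.e. that the
family is the indicator of the graph of a function `X → Y`.
-/

section

open Finset

variable {X Y : Type*} [Fintype Y]

def IsFiberwisePartition {C : Type*} [BooleanAlgebra C] (f : X × Y → C) : Prop :=
  (∀ x, (univ.sup fun y => f (x, y)) = ⊤) ∧ ∀ x y y', y ≠ y' → f (x, y) ⊓ f (x, y') = ⊥

theorem IsFiberwisePartition.comp {C D : Type*} [BooleanAlgebra C] [BooleanAlgebra D]
    {f : X × Y → C} (hf : IsFiberwisePartition f) (h : BoundedLatticeHom C D) :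
    IsFiberwisePartition (h ∘ f) := by
  refine ⟨fun x => ?_, fun x y y' hne => ?_⟩
  · simpa [Function.comp_def, hf.1 x] using (map_finset_sup h univ fun y => f (x, y)).symm
  · simp [← map_inf, hf.2 x y y' hne]

theorem isFiberwisePartition_bool_iff {f : X × Y → Bool} :
    IsFiberwisePartition f ↔ ∀ x, ∃! y, f (x, y) = true := by
  have hdisj_iff : ∀ b b' : Bool, b ⊓ b' = ⊥ ↔ (b = true → b' = false) := fun b b' =>
    Bool.and_eq_false_imp
  simp only [IsFiberwisePartition, Finset.sup_eq_top_iff, mem_univ, true_and, hdisj_iff]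
  simp only [top_eq_true]
  refine ⟨fun ⟨hex, hdisj⟩ x => ?_, fun h => ⟨fun x => (h x).exists, fun x y y' hne hy => ?_⟩⟩
  · obtain ⟨y, hy⟩ := hex x
    refine ⟨y, hy, fun y' hy' => ?_⟩
    by_contra hne
    simpa [hy] using hdisj x y' y hne hy'
  · by_contra hy'
    exact hne ((h x).unique hy (by simpa using hy'))

def graphIndicator [DecidableEq Y] (φ : X → Y) (p : X × Y) : Bool :=
  decide (φ p.1 = p.2)

noncomputable def equivFiberwisePartitionBool [DecidableEq Y] :
    (X → Y) ≃ {f : X × Y → Bool // IsFiberwisePartition f} where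
  toFun φ := ⟨graphIndicator φ, isFiberwisePartition_bool_iff.2 fun x =>
    ⟨φ x, by simp [graphIndicator], fun y hy => by simpa [graphIndicator, eq_comm] using hy⟩⟩
  invFun f x := (isFiberwisePartition_bool_iff.1 f.2 x).exists.choose
  left_inv φ := funext fun x => by simp [graphIndicator]
  right_inv f := by
    ext ⟨x, y⟩
    have hunique := isFiberwisePartition_bool_iff.1 f.2 x
    rw [Bool.eq_iff_iff]
    simp only [graphIndicator, decide_eq_true_eq]
    exact ⟨fun h => h ▸ hunique.exists.choose_spec, hunique.unique hunique.exists.choose_spec⟩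

noncomputable def boundedLatticeHomEquivOfPresentation {B C : Type*} [BooleanAlgebra B]
    [BooleanAlgebra C] {g : X × Y → B} (hg : IsFiberwisePartition g)
    (huniv : ∀ f : X × Y → C, IsFiberwisePartition f →
      ∃! h : BoundedLatticeHom B C, ∀ p, h (g p) = f p) :
    BoundedLatticeHom B C ≃ {f : X × Y → C // IsFiberwisePartition f} :=
  Equiv.ofBijective (fun h => ⟨h ∘ g, hg.comp h⟩)
    ⟨fun _ h₂ hh => (huniv _ (hg.comp h₂)).unique (fun p => congrFun (congrArg Subtype.val hh) p)
        fun _ => rfl,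
      fun f => (huniv f.1 f.2).exists.imp fun _ h => Subtype.ext (funext h)⟩

end

/-- Let `Y` be a finite set with decidable equality and `X` any set.  If `B` is the
Boolean algebra presented by generators `X × Y` subject to the relations
`⊤ ≤ ⋁_{y} (x,y)` and `(x,y) ⊓ (x,y') ≤ ⊥` for `y ≠ y'` (expressed by the
universal property of the presentation), then the ultrafilters of `B` (Boolean
homomorphisms `B → Bool`) are in bijection with the functions `X → Y`. -/
theorem presented_boolean_algebra_ultrafilters
    (X Y : Type*) [Fintype Y] [DecidableEq Y]
    (B : Type*) [BooleanAlgebra B] (g : X × Y → B)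
    -- the relations hold in `B`:
    (hcover : ∀ x : X, (Finset.univ.sup fun y : Y => g (x, y)) = ⊤)
    (hdisj : ∀ (x : X) (y y' : Y), y ≠ y' → g (x, y) ⊓ g (x, y') = ⊥)
    -- universal property: `B` is freely generated by `g` subject to the relations:
    (huniv : ∀ (C : Type) [BooleanAlgebra C] (f : X × Y → C),
      (∀ x : X, (Finset.univ.sup fun y : Y => f (x, y)) = ⊤) →
      (∀ (x : X) (y y' : Y), y ≠ y' → f (x, y) ⊓ f (x, y') = ⊥) →
      ∃! h : BoundedLatticeHom B C, ∀ p : X × Y, h (g p) = f p) :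
    ∃ e : (X → Y) ≃ BoundedLatticeHom B Bool,
      ∀ (φ : X → Y) (x : X) (y : Y), (e φ (g (x, y)) = true ↔ φ x = y) := by
  let homEquiv := boundedLatticeHomEquivOfPresentation (C := Bool) ⟨hcover, hdisj⟩
    fun f hf => huniv Bool f hf.1 hf.2
  refine ⟨equivFiberwisePartitionBool.trans homEquiv.symm, fun φ x y => ?_⟩
  have hgen : homEquiv.symm (equivFiberwisePartitionBool φ) (g (x, y)) = graphIndicator φ (x, y) :=
    congrFun (congrArg Subtype.val (homEquiv.apply_symm_apply _)) (x, y)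
  rw [Equiv.trans_apply, hgen, graphIndicator, decide_eq_true_iff]
end
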